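/- The six triangles of the regular triangular tiling sharing a common vertex form a hexagon in the dual graph, and their cubulation images are all contained in a single unit cube of the standard cubulation of R^3; i.e., there exists (a,b,c) ∈ Z^3 such that all six images lie in {a,a+1}×{b,b+1}×{c,c+1}. -/

import Mathlib

noncomputable def lineF : Fin 3 → ℝ × ℝ → ℝ := fun i p =>
  if i = 0 then p.2 - 1/3
  else if i = 1 then (Real.sqrt 3 * p.1 - p.2) / 2 - 1/3
  else -(Real.sqrt 3 * p.1 + p.2) / 2 - 1/3

def triRegion (v : Fin 3 → ℤ) : Set (ℝ × ℝ) :=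
  {p | ∀ i : Fin 3, ((v i : ℝ) - 1 ≤ lineF i p ∧ lineF i p ≤ (v i : ℝ))}

def IsTile (v : Fin 3 → ℤ) : Prop := (interior (triRegion v)).Nonempty

abbrev Tile : Type := {v : Fin 3 → ℤ // IsTile v}

def Tile.region (T : Tile) : Set (ℝ × ℝ) := triRegion T.val

def EdgeAdj (T U : Tile) : Prop := T ≠ U ∧ ¬ (T.region ∩ U.region).Subsingleton

def VertexAdj (T U : Tile) : Prop := T ≠ U ∧ (T.region ∩ U.region).Nonempty

def sumv (v : Fin 3 → ℤ) : ℤ := v 0 + v 1 + v 2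

def dualGraph : SimpleGraph Tile where
  Adj := EdgeAdj
  symm := ⟨fun T U h => ⟨h.1.symm, fun hs => h.2 (by rwa [Set.inter_comm] at hs)⟩⟩
  loopless := ⟨fun T h => h.1 rfl⟩

/-!
Put `w i = ⌈lineF i p⌉`. Every tile through `p` is `w + 𝟙_A` for some `A ⊆ Fin 3`, which is the
common cube. A tile has coordinate sum `0` or `1`, so the six distinct subsets `A` have sizes
`-sumv w` or `1 - sumv w`; since only five subsets avoid size `1` and only five avoid size `2`,
`sumv w = -1`. Then `lineF i p = w i` for all `i`, so `p` is a vertex of the tiling, and the six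
tiles are `w + 𝟙_A` for the six nonempty proper subsets `A`. Ordered cyclically so that consecutive
subsets differ in one element, consecutive tiles both contain `p` and the midpoint of their
common edge.
-/

open Finset Function

lemma lineF_zero (q : ℝ × ℝ) : lineF 0 q = q.2 - 1 / 3 := by simp [lineF]

lemma lineF_one (q : ℝ × ℝ) : lineF 1 q = (√3 * q.1 - q.2) / 2 - 1 / 3 := by simp [lineF]

lemma lineF_two (q : ℝ × ℝ) : lineF 2 q = -(√3 * q.1 + q.2) / 2 - 1 / 3 := by simp [lineF]

lemma lineF_sum (q : ℝ × ℝ) : lineF 0 q + lineF 1 q + lineF 2 q = -1 := by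
  rw [lineF_zero, lineF_one, lineF_two]; ring

lemma eq_of_lineF_eq {q q' : ℝ × ℝ} (h₀ : lineF 0 q = lineF 0 q') (h₁ : lineF 1 q = lineF 1 q') :
    q = q' := by
  rw [lineF_zero, lineF_zero] at h₀
  rw [lineF_one, lineF_one] at h₁
  have hs : √3 ≠ 0 := by positivity
  ext
  · exact mul_left_cancel₀ hs (by linarith)
  · linarith

lemma exists_lineF_eq (c : Fin 3 → ℝ) (hc : c 0 + c 1 + c 2 = -1) : ∃ q, ∀ i, lineF i q = c i := by
  set q : ℝ × ℝ := ((2 * c 1 + c 0 + 1) / √3, c 0 + 1 / 3)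
  have h₀ : lineF 0 q = c 0 := by rw [lineF_zero]; ring
  have h₁ : lineF 1 q = c 1 := by
    rw [lineF_one, mul_div_cancel₀ _ (by positivity : √3 ≠ 0)]; ring
  refine ⟨q, fun i => ?_⟩
  fin_cases i
  · exact h₀
  · exact h₁
  · have := lineF_sum q; simp only [Fin.reduceFinMk, Fin.isValue]; linarith

lemma cast_sumv (v : Fin 3 → ℤ) : ((sumv v : ℤ) : ℝ) = v 0 + v 1 + v 2 := by
  simp [sumv]

/-- As `∑ i, lineF i = -1`, a value `sumv v ∉ {0, 1}` pins every `lineF i` to the same endpoint of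
its interval on all of `triRegion v`. -/
lemma triRegion_subsingleton {v : Fin 3 → ℤ} (h₀ : sumv v ≠ 0) (h₁ : sumv v ≠ 1) :
    (triRegion v).Subsingleton := by
  intro q hq q' hq'
  have hsum := cast_sumv v
  have pin : ∀ r ∈ triRegion v, ∀ i,
      lineF i r = if sumv v < 0 then (v i : ℝ) else v i - 1 := by
    intro r hr i
    obtain ⟨a₀, b₀⟩ := hr 0
    obtain ⟨a₁, b₁⟩ := hr 1
    obtain ⟨a₂, b₂⟩ := hr 2
    have := lineF_sum r
    split_ifs with hneg
    · have : ((sumv v : ℤ) : ℝ) ≤ -1 := by exact_mod_cast (by omega : sumv v ≤ -1)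
      fin_cases i <;> simp only [Fin.zero_eta, Fin.mk_one, Fin.reduceFinMk] <;> linarith
    · have : (2 : ℝ) ≤ ((sumv v : ℤ) : ℝ) := by exact_mod_cast (by omega : 2 ≤ sumv v)
      fin_cases i <;> simp only [Fin.zero_eta, Fin.mk_one, Fin.reduceFinMk] <;> linarith
  exact eq_of_lineF_eq (by rw [pin q hq, pin q' hq']) (by rw [pin q hq, pin q' hq'])

lemma Tile.sumv_eq_zero_or_one (T : Tile) : sumv T.val = 0 ∨ sumv T.val = 1 := by
  by_contra! h
  obtain ⟨x, hx⟩ := T.2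
  rcases (triRegion_subsingleton h.1 h.2).eq_empty_or_singleton with h' | ⟨y, h'⟩
  · rw [h', interior_empty] at hx; exact hx
  · rw [h', interior_singleton] at hx; exact hx

lemma eq_ceil_or_eq_ceil_add_one {x : ℝ} {n : ℤ} (h₁ : n - 1 ≤ x) (h₂ : x ≤ n) :
    n = ⌈x⌉ ∨ n = ⌈x⌉ + 1 := by
  rcases h₁.lt_or_eq with h | h
  · exact Or.inl (Int.ceil_eq_iff.mpr ⟨h, h₂⟩).symm
  · right
    rw [← h, ← Int.cast_one, ← Int.cast_sub, Int.ceil_intCast]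
    ring

def cubeVertex (w : Fin 3 → ℤ) (A : Finset (Fin 3)) : Fin 3 → ℤ :=
  fun i => w i + if i ∈ A then 1 else 0

lemma cubeVertex_injective (w : Fin 3 → ℤ) : Injective (cubeVertex w) := by
  intro A B h
  ext i
  have := congrFun h i
  simp only [cubeVertex] at this
  split_ifs at this <;> simp_all

lemma sumv_cubeVertex (w : Fin 3 → ℤ) (A : Finset (Fin 3)) :
    sumv (cubeVertex w A) = sumv w + #A := by
  have hA : (#A : ℤ) = ∑ i, if i ∈ A then 1 else 0 := by simp
  rw [hA, Fin.sum_univ_three]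
  simp only [sumv, cubeVertex]
  ring

lemma eq_cubeVertex_of_mem_triRegion {v : Fin 3 → ℤ} {q : ℝ × ℝ} (hq : q ∈ triRegion v) :
    v = cubeVertex (fun i => ⌈lineF i q⌉) {i | v i ≠ ⌈lineF i q⌉} := by
  funext i
  rcases eq_ceil_or_eq_ceil_add_one (hq i).1 (hq i).2 with h | h <;> simp [cubeVertex, h]

/-- Only five subsets of `Fin 3` avoid size `1` (resp. `2`). -/
lemma exists_card_eq_of_injective {A : Fin 6 → Finset (Fin 3)} (hA : Injective A) {n : ℕ}
    (hn : n = 1 ∨ n = 2) : ∃ j, #(A j) = n := by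
  by_contra! h
  have := card_le_card_of_injOn (s := univ) (t := {B : Finset (Fin 3) | #B ≠ n}) A
    (fun j _ => by simpa using h j) hA.injOn
  revert this
  rcases hn with rfl | rfl <;> decide

/-- Consecutive members differ in exactly one element: this is the cyclic order of the six
triangles around a vertex of the tiling. -/
def hexSubset : Fin 6 → Finset (Fin 3) := ![{0}, {0, 1}, {1}, {1, 2}, {2}, {0, 2}]

lemma exists_hexSubset_eq {A : Finset (Fin 3)} (hA : #A = 1 ∨ #A = 2) : ∃ k, hexSubset k = A := by
  revert A; decide

lemma card_hexSubset_add_card_succ (k : Fin 6) : #(hexSubset k) + #(hexSubset (k + 1)) = 3 := by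
  revert k; decide

lemma hexSubset_succ_ne_compl (k : Fin 6) : hexSubset (k + 1) ≠ (hexSubset k)ᶜ := by
  revert k; decide

lemma exists_perm_hexSubset {A : Fin 6 → Finset (Fin 3)} (hA : Injective A)
    (hcard : ∀ j, #(A j) = 1 ∨ #(A j) = 2) :
    ∃ σ : Equiv.Perm (Fin 6), ∀ k, A (σ k) = hexSubset k := by
  choose τ hτ using fun j => exists_hexSubset_eq (hcard j)
  have hτ_inj : Injective τ := fun j j' h => hA (by rw [← hτ, ← hτ, h])
  let e := Equiv.ofBijective τ (Finite.injective_iff_bijective.mp hτ_inj)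
  refine ⟨e.symm, fun k => ?_⟩
  rw [← hτ]
  exact congrArg hexSubset (e.apply_symm_apply k)

lemma lineF_eq_of_le_of_sumv_eq {q : ℝ × ℝ} {w : Fin 3 → ℤ} (hle : ∀ i, lineF i q ≤ w i)
    (hw : sumv w = -1) (i : Fin 3) : lineF i q = w i := by
  have hsum := lineF_sum q
  have hw' : ((sumv w : ℤ) : ℝ) = -1 := by exact_mod_cast hw
  rw [cast_sumv] at hw'
  have := hle 0; have := hle 1; have := hle 2
  fin_cases i <;> simp only [Fin.zero_eta, Fin.mk_one, Fin.reduceFinMk] <;> linarith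

lemma mem_triRegion_cubeVertex {w : Fin 3 → ℤ} {A : Finset (Fin 3)} {q : ℝ × ℝ}
    (h : ∀ i, (if i ∈ A then (0 : ℝ) else -1) ≤ lineF i q - w i ∧
      lineF i q - w i ≤ if i ∈ A then 1 else 0) :
    q ∈ triRegion (cubeVertex w A) := by
  intro i
  obtain ⟨h₁, h₂⟩ := h i
  simp only [cubeVertex]
  split_ifs at h₁ h₂ ⊢ <;> push_cast <;> constructor <;> linarith

lemma dualGraph_adj_of_cubeVertex {w : Fin 3 → ℤ} {p : ℝ × ℝ} (hp : ∀ i, lineF i p = w i)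
    {T U : Tile} {A B : Finset (Fin 3)} (hT : T.val = cubeVertex w A)
    (hU : U.val = cubeVertex w B) (hcard : #A + #B = 3) (hcompl : B ≠ Aᶜ) :
    dualGraph.Adj T U := by
  have hTU : T ≠ U := by
    rintro rfl
    have := cubeVertex_injective w (hT.symm.trans hU)
    subst this
    omega
  obtain ⟨i₀, hi₀⟩ : ∃ i, (i ∈ A ↔ i ∈ B) := by
    by_contra! h
    exact hcompl (by ext i; rcases h i with h | h <;> simp [h.1, h.2])
  -- the midpoint of the common edge of `T` and `U`
  set c : Fin 3 → ℝ := fun i =>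
    w i + ((if i ∈ A then 1 else 0) + (if i ∈ B then 1 else 0) - 1) / 2 with hc
  obtain ⟨m, hm⟩ := exists_lineF_eq c (by
    have hsA := congrArg (Int.cast : ℤ → ℝ) (sumv_cubeVertex w A)
    have hsB := congrArg (Int.cast : ℤ → ℝ) (sumv_cubeVertex w B)
    simp only [sumv, cubeVertex] at hsA hsB
    push_cast at hsA hsB
    have hcard' : (#A : ℝ) + #B = 3 := by exact_mod_cast hcard
    have hw := lineF_sum p
    rw [hp, hp, hp] at hw
    simp only [hc]
    linarith)
  have hpm : p ≠ m := by
    intro h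
    have := hm i₀
    rw [← h, hp, hc] at this
    by_cases hA : i₀ ∈ A <;> simp [hA, hi₀.mp, hi₀.not.mp] at this
  refine ⟨hTU, fun hsub => hpm (hsub ⟨?_, ?_⟩ ⟨?_, ?_⟩)⟩
  all_goals
    simp only [Tile.region, hT, hU]
    refine mem_triRegion_cubeVertex fun i => ?_
    simp only [hp, hm, hc]
    split_ifs <;> norm_num

theorem hexagon_in_common_cube (T : Fin 6 → Tile) (hinj : Function.Injective T)
    (p : ℝ × ℝ) (hp : ∀ j : Fin 6, p ∈ (T j).region) :
    (∃ σ : Equiv.Perm (Fin 6), ∀ j : Fin 6, dualGraph.Adj (T (σ j)) (T (σ (j + 1)))) ∧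
    (∃ w : Fin 3 → ℤ, ∀ j : Fin 6, ∀ i : Fin 3, (T j).val i = w i ∨ (T j).val i = w i + 1) := by
  set w : Fin 3 → ℤ := fun i => ⌈lineF i p⌉
  set A : Fin 6 → Finset (Fin 3) := fun j => {i | (T j).val i ≠ w i}
  have hTA : ∀ j, (T j).val = cubeVertex w (A j) := fun j => eq_cubeVertex_of_mem_triRegion (hp j)
  have hA : Injective A := fun j j' h => hinj (Subtype.ext (by rw [hTA, hTA, h]))
  have hsum : ∀ j, sumv w + #(A j) = 0 ∨ sumv w + #(A j) = 1 := fun j => by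
    rw [← sumv_cubeVertex, ← hTA]
    exact (T j).sumv_eq_zero_or_one
  have hw : sumv w = -1 := by
    obtain ⟨j₁, h₁⟩ := exists_card_eq_of_injective hA (Or.inl rfl)
    obtain ⟨j₂, h₂⟩ := exists_card_eq_of_injective hA (Or.inr rfl)
    have := hsum j₁
    have := hsum j₂
    omega
  have hvertex : ∀ i, lineF i p = w i := lineF_eq_of_le_of_sumv_eq (fun i => Int.le_ceil _) hw
  obtain ⟨σ, hσ⟩ := exists_perm_hexSubset hA fun j => by have := hsum j; omega
  refine ⟨⟨σ, fun k => dualGraph_adj_of_cubeVertex hvertex (hTA _) (hTA _) ?_ ?_⟩,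
    ⟨w, fun j i => eq_ceil_or_eq_ceil_add_one ((hp j) i).1 ((hp j) i).2⟩⟩
  · rw [hσ, hσ]
    exact card_hexSubset_add_card_succ k
  · rw [hσ, hσ]
    exact hexSubset_succ_ne_compl k
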